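/- For n > 6: if there exists a minimal pancyclic graph on n vertices containing an arc of its Hamiltonian cycle of length at least (n−1)/2 with no chord joining the arc's endpoints, then m(n−1) < m(n); and if there exists a minimal pancyclic graph on n vertices containing an arc of length at least (n+2)/3 whose endpoints are joined by a chord, then m(n−1) ≤ m(n). -/

import Mathlib

/-!
Contract the edge from `a + 1` to `a + 2` of an arc `a, …, a + L` (`L ≥ 3`). Since the interior
vertices of the arc have degree 2, a cycle meeting the interior runs through the whole arc; so a
cycle through `a + 1` has length at least `L + 1` (at least `L + 2` if `a` and `a + L` are not
adjacent), and a cycle avoiding `a + 1` has length at most `n - L + 1`. A `k`-cycle of the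
contraction then comes from a `(k + 1)`-cycle through `a + 1` when `k` is large, from a `k`-cycle
avoiding `a + 1` when `k` is small, and, when the chord `a (a + L)` is present, from a
`(k + L - 1)`-cycle through the arc in which the arc is replaced by the chord. The contraction
has one edge fewer, so `m (n - 1) ≤ m n - 1`.
-/

open SimpleGraph

/-- `G` has a cycle of length `k`. -/
def HasCycleLength {V : Type*} (G : SimpleGraph V) (k : ℕ) : Prop :=
  ∃ (v : V) (w : G.Walk v v), w.IsCycle ∧ w.length = k

/-- A graph on a finite vertex type is pancyclic if it has a cycle of every
length `k` with `3 ≤ k ≤ n`, where `n` is the number of vertices. -/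
def Pancyclic {V : Type*} [Fintype V] (G : SimpleGraph V) : Prop :=
  ∀ k : ℕ, 3 ≤ k → k ≤ Fintype.card V → HasCycleLength G k

/-- `m n` is the minimum number of edges of a pancyclic graph on `n` vertices. -/
noncomputable def m (n : ℕ) : ℕ :=
  sInf {e | ∃ G : SimpleGraph (Fin n), Pancyclic G ∧ G.edgeSet.ncard = e}

/-- Contract the edge `{u, v}` of `G`: delete `u` and attach its neighbors to `v`. -/
def contractEdge {V : Type*} (G : SimpleGraph V) (u v : V) :
    SimpleGraph {x : V // x ≠ u} where
  Adj a b := a ≠ b ∧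
    (G.Adj a b ∨ ((a : V) = v ∧ G.Adj u b) ∨ ((b : V) = v ∧ G.Adj a u))
  symm := by
    constructor
    rintro a b ⟨hab, h⟩
    refine ⟨hab.symm, ?_⟩
    rcases h with h | ⟨h1, h2⟩ | ⟨h1, h2⟩
    · exact Or.inl h.symm
    · exact Or.inr (Or.inr ⟨h1, h2.symm⟩)
    · exact Or.inr (Or.inl ⟨h1, h2.symm⟩)
  loopless := ⟨fun a h => h.1 rfl⟩

/-- `a, a+1, …, a+L` is an arc of the standard Hamiltonian cycle `0,1,…,n-1` of
`G` on `ZMod n`: a maximal path of the cycle all of whose interior vertices have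
degree 2 (maximality: the two endpoints have degree greater than 2). -/
def IsArc {n : ℕ} (G : SimpleGraph (ZMod n)) (a : ZMod n) (L : ℕ) : Prop :=
  L < n ∧
  (∀ t : ℕ, 0 < t → t < L → (G.neighborSet (a + (t : ZMod n))).ncard = 2) ∧
  2 < (G.neighborSet a).ncard ∧ 2 < (G.neighborSet (a + (L : ZMod n))).ncard

theorem HasCycleLength.map {V W : Type*} {G : SimpleGraph V} {H : SimpleGraph W} {k : ℕ}
    (f : G →g H) (hf : Function.Injective f) (h : HasCycleLength G k) : HasCycleLength H k := by
  obtain ⟨v, c, hc, rfl⟩ := h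
  exact ⟨f v, c.map f, hc.map hf, c.length_map f⟩

namespace SimpleGraph

variable {V : Type*} {G : SimpleGraph V}

theorem eq_or_eq_of_adj_of_ncard_neighborSet_eq_two {v x y z : V}
    (hv : (G.neighborSet v).ncard = 2) (hx : G.Adj v x) (hy : G.Adj v y) (hxy : x ≠ y)
    (hz : G.Adj v z) : z = x ∨ z = y := by
  have hN : ({x, y} : Set V) = G.neighborSet v :=
    Set.eq_of_subset_of_ncard_le (Set.insert_subset hx (Set.singleton_subset_iff.mpr hy))
      (by rw [hv, Set.ncard_pair hxy]) (Set.finite_of_ncard_pos (by omega))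
  simpa [← hN] using (show z ∈ G.neighborSet v from hz)

namespace Walk

variable {u r : V}

theorem IsCycle.card_le_length [DecidableEq V] {c : G.Walk u u} (hc : c.IsCycle) {s : Finset V}
    (hs : ∀ x ∈ s, x ∈ c.support) : s.card ≤ c.length := by
  have hsub : s ⊆ c.tail.support.toFinset := fun x hx => by
    rw [List.mem_toFinset, support_tail_of_not_nil _ hc.not_nil]
    rcases (mem_support_iff c).mp (hs x hx) with rfl | h
    · exact end_mem_tail_support hc.not_nil
    · exact h
  calc s.card ≤ c.tail.support.toFinset.card := Finset.card_le_card hsub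
    _ = c.length := by
      rw [List.toFinset_card_of_nodup hc.isPath_tail.support_nodup, length_support,
        length_tail_add_one hc.not_nil]

theorem IsCycle.length_add_card_le [Fintype V] [DecidableEq V] {c : G.Walk u u}
    (hc : c.IsCycle) {s : Finset V} (hs : ∀ x ∈ s, x ∉ c.support) :
    c.length + s.card ≤ Fintype.card V := by
  have hdisj : Disjoint c.tail.support.toFinset s := by
    rw [Finset.disjoint_right]
    intro x hx hx'
    rw [List.mem_toFinset, support_tail_of_not_nil _ hc.not_nil] at hx'
    exact hs x hx (List.mem_of_mem_tail hx')
  calc c.length + s.card = (c.tail.support.toFinset ∪ s).card := by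
        rw [Finset.card_union_of_disjoint hdisj, List.toFinset_card_of_nodup
          hc.isPath_tail.support_nodup, length_support, length_tail_add_one hc.not_nil]
    _ ≤ Fintype.card V := Finset.card_le_univ _

theorem IsCycle.exists_adj_adj_of_mem_support {c : G.Walk u u} (hc : c.IsCycle)
    (hr : r ∈ c.support) :
    ∃ z₁ z₂, z₁ ≠ z₂ ∧ G.Adj r z₁ ∧ G.Adj r z₂ ∧ z₁ ∈ c.support ∧ z₂ ∈ c.support := by
  classical
  have hc' := (isCycle_rotate hr).mpr hc
  exact ⟨_, _, hc'.snd_ne_penultimate, adj_snd hc'.not_nil, (adj_penultimate hc'.not_nil).symm,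
    (mem_support_rotate_iff c r hr).mp (getVert_mem_support _ _),
    (mem_support_rotate_iff c r hr).mp (getVert_mem_support _ _)⟩

theorem IsCycle.exists_isPath_of_mem_support {c : G.Walk u u} (hc : c.IsCycle)
    (hr : r ∈ c.support) :
    ∃ (z₁ z₂ : V) (p : G.Walk z₁ z₂), G.Adj r z₁ ∧ G.Adj r z₂ ∧ p.IsPath ∧
      r ∉ p.support ∧ p.length + 2 = c.length := by
  classical
  suffices ∀ c : G.Walk r r, c.IsCycle → ∃ (z₁ z₂ : V) (p : G.Walk z₁ z₂), G.Adj r z₁ ∧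
      G.Adj r z₂ ∧ p.IsPath ∧ r ∉ p.support ∧ p.length + 2 = c.length by
    simpa using this _ ((isCycle_rotate hr).mpr hc)
  rintro (_ | ⟨h, w⟩) hc
  · exact absurd rfl hc.ne_nil
  obtain ⟨hw, -⟩ := (cons_isCycle_iff w h).mp hc
  obtain ⟨z₂, h₂, q, hq⟩ := not_nil_iff.mp (not_nil_of_ne (p := w.reverse) h.ne)
  have hq' : (cons h₂ q).IsPath := hq ▸ hw.reverse
  refine ⟨_, _, _, h, h₂, hq'.of_cons.reverse, by simpa using ((cons_isPath_iff _ _).mp hq').2, ?_⟩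
  have := congrArg length hq
  simp only [length_reverse, length_cons] at this ⊢
  omega

theorem IsCycle.exists_isPath_of_forall_adj {v w : V} (hnb : ∀ z, G.Adj r z → z = w ∨ z = v)
    {c : G.Walk u u} (hc : c.IsCycle) (hr : r ∈ c.support) :
    ∃ p : G.Walk v w, p.IsPath ∧ r ∉ p.support ∧ p.length + 2 = c.length := by
  obtain ⟨z₁, z₂, p, h₁, h₂, hp, hrp, hplen⟩ := hc.exists_isPath_of_mem_support hr
  have hnil : ∀ z (q : G.Walk z z), q.IsPath → q.length + 2 ≠ c.length := by
    intro z q hq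
    rw [(isPath_iff_nil.mp hq).length_eq_zero]
    have := hc.three_le_length
    omega
  rcases hnb z₁ h₁ with rfl | rfl <;> rcases hnb z₂ h₂ with rfl | rfl
  · exact absurd hplen (hnil _ p hp)
  · exact ⟨p.reverse, hp.reverse, by simpa using hrp, by simpa using hplen⟩
  · exact ⟨p, hp, hrp, hplen⟩
  · exact absurd hplen (hnil _ p hp)

end Walk

variable {u v w : V}

theorem image_edgeSet_contractEdge (huw : G.Adj u w) (huv : G.Adj u v) (hwv : w ≠ v)
    (hnb : ∀ z, G.Adj u z → z = w ∨ z = v) :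
    Sym2.map Subtype.val '' (contractEdge G u v).edgeSet =
      insert s(w, v) (G.edgeSet \ {s(u, w), s(u, v)}) := by
  ext e
  induction e using Sym2.ind with | _ x y => ?_
  simp only [Set.mem_image, Sym2.exists, Sym2.map_mk, mem_edgeSet, contractEdge, Subtype.exists,
    ne_eq, Subtype.mk.injEq, Set.mem_insert_iff, Sym2.eq_iff, Set.mem_sdiff, Set.mem_singleton_iff,
    not_or]
  constructor
  · rintro ⟨a, ha, b, hb, ⟨hab, h⟩, ⟨rfl, rfl⟩ | ⟨rfl, rfl⟩⟩ <;>
      grind [hnb a, hnb b, G.adj_symm, G.ne_of_adj]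
  · rintro ((⟨rfl, rfl⟩ | ⟨rfl, rfl⟩) | ⟨hxy, h⟩)
    · exact ⟨x, huw.ne', y, huv.ne', ⟨hwv, .inr (.inr ⟨rfl, huw.symm⟩)⟩, .inl ⟨rfl, rfl⟩⟩
    · exact ⟨y, huw.ne', x, huv.ne', ⟨hwv, .inr (.inr ⟨rfl, huw.symm⟩)⟩, .inr ⟨rfl, rfl⟩⟩
    · have hx : x ≠ u := by rintro rfl; grind [hnb y hxy]
      have hy : y ≠ u := by rintro rfl; grind [hnb x hxy.symm]
      exact ⟨x, hx, y, hy, ⟨hxy.ne, .inl hxy⟩, .inl ⟨rfl, rfl⟩⟩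

theorem ncard_edgeSet_contractEdge_add_one [Finite V] (huw : G.Adj u w) (huv : G.Adj u v)
    (hwv : w ≠ v) (hnb : ∀ z, G.Adj u z → z = w ∨ z = v) (hnadj : ¬G.Adj w v) :
    (contractEdge G u v).edgeSet.ncard + 1 = G.edgeSet.ncard := by
  have hpair : {s(u, w), s(u, v)} ⊆ G.edgeSet := Set.pair_subset huw huv
  have hcard : ({s(u, w), s(u, v)} : Set (Sym2 V)).ncard = 2 :=
    Set.ncard_pair (by simp [hwv, huw.ne'])
  rw [← Set.ncard_image_of_injective _ (Sym2.map.injective Subtype.val_injective),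
    image_edgeSet_contractEdge huw huv hwv hnb,
    Set.ncard_insert_of_notMem (fun h => hnadj h.1), Set.ncard_sdiff hpair, hcard]
  have := Set.ncard_le_ncard hpair
  omega

theorem Walk.length_induce {s : Set V} {x y : V} (p : G.Walk x y) (hp : ∀ z ∈ p.support, z ∈ s) :
    (p.induce s hp).length = p.length := by
  have := congrArg length (p.map_induce hp)
  rwa [Walk.length_map] at this

variable (G u v) in
def induceHomContractEdge : G.induce {x | x ≠ u} →g contractEdge G u v where
  toFun := id
  map_rel' h := ⟨h.ne, .inl h⟩

theorem hasCycleLength_contractEdge_of_notMem {x : V} {c : G.Walk x x} (hc : c.IsCycle)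
    (hu : u ∉ c.support) : HasCycleLength (contractEdge G u v) c.length := by
  have hs : ∀ z ∈ c.support, z ∈ {z | z ≠ u} := fun z hz h => hu (h ▸ hz)
  refine HasCycleLength.map (induceHomContractEdge G u v) Function.injective_id
    ⟨_, c.induce _ hs, ?_, c.length_induce hs⟩
  exact .of_map (f := (Embedding.induce _).toHom) (by rwa [Walk.map_induce])

theorem hasCycleLength_contractEdge_of_isPath (huw : G.Adj u w) {p : G.Walk v w}
    (hp : p.IsPath) (hu : u ∉ p.support) (hlen : 2 ≤ p.length) :
    HasCycleLength (contractEdge G u v) (p.length + 1) := by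
  have hs : ∀ z ∈ p.support, z ∈ {z | z ≠ u} := fun z hz h => hu (h ▸ hz)
  set q : (contractEdge G u v).Walk ⟨v, hs v p.start_mem_support⟩ ⟨w, hs w p.end_mem_support⟩ :=
    (p.induce _ hs).map (induceHomContractEdge G u v)
  have hq : q.IsPath := (Walk.IsPath.of_map (f := (Embedding.induce _).toHom)
    (by rwa [Walk.map_induce])).map Function.injective_id
  have hqlen : q.length = p.length := (Walk.length_map _ _).trans (p.length_induce hs)
  have hwv : w ≠ v := by
    rintro rfl
    rw [(Walk.isPath_iff_nil.mp hp).length_eq_zero] at hlen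
    omega
  have hadj : (contractEdge G u v).Adj ⟨w, huw.ne'⟩ ⟨v, hs v p.start_mem_support⟩ :=
    ⟨fun h => hwv (congrArg Subtype.val h), .inr (.inr ⟨rfl, huw.symm⟩)⟩
  refine ⟨_, .cons hadj q, (Walk.cons_isCycle_iff q hadj).mpr ⟨hq, fun h => ?_⟩,
    by rw [Walk.length_cons, hqlen]⟩
  have := hq.length_eq_one_of_mem_edges (Sym2.eq_swap ▸ h)
  omega

theorem hasCycleLength_contractEdge_of_mem (huw : G.Adj u w)
    (hnb : ∀ z, G.Adj u z → z = w ∨ z = v) {x : V} {c : G.Walk x x} (hc : c.IsCycle)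
    (hu : u ∈ c.support) (hlen : 4 ≤ c.length) :
    HasCycleLength (contractEdge G u v) (c.length - 1) := by
  obtain ⟨p, hp, hup, hplen⟩ := hc.exists_isPath_of_forall_adj hnb hu
  simpa [← hplen] using hasCycleLength_contractEdge_of_isPath huw hp hup (by omega)

end SimpleGraph

theorem Pancyclic.m_card_le_ncard_edgeSet {W : Type*} [Fintype W] {H : SimpleGraph W}
    (hH : Pancyclic H) :
    m (Fintype.card W) ≤ H.edgeSet.ncard := by
  let φ := Iso.map (Fintype.equivFin W) H
  have hφ : Pancyclic (H.map (Fintype.equivFin W).toEmbedding) := fun k h3 hk =>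
    (hH k h3 (by simpa using hk)).map φ.toHom φ.injective
  calc m (Fintype.card W) ≤ (H.map (Fintype.equivFin W).toEmbedding).edgeSet.ncard :=
        Nat.sInf_le ⟨_, hφ, rfl⟩
    _ = H.edgeSet.ncard := by simpa using Nat.card_congr φ.mapEdgeSet.symm

theorem ZMod.add_natCast_injOn {n : ℕ} (a : ZMod n) :
    Set.InjOn (fun t : ℕ => a + t) (Set.Iio n) := by
  intro i hi j hj h
  have := congrArg ZMod.val (add_left_cancel h)
  rwa [ZMod.val_natCast_of_lt hi, ZMod.val_natCast_of_lt hj] at this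

theorem ZMod.card_subtype_ne {n : ℕ} [NeZero n] (u : ZMod n) :
    Fintype.card {x // x ≠ u} = n - 1 := by
  rw [Fintype.card_subtype_compl, Fintype.card_subtype_eq, ZMod.card]

/-- `a, a + 1, …, a + L` is a stretch of the Hamiltonian cycle `i ↦ i + 1` whose interior
vertices have degree 2: an `IsArc` without the maximality condition. -/
structure HamArc {n : ℕ} (G : SimpleGraph (ZMod n)) (a : ZMod n) (L : ℕ) : Prop where
  adj_add_one : ∀ i : ZMod n, G.Adj i (i + 1)
  lt : L < n
  ncard_neighborSet : ∀ t : ℕ, 0 < t → t < L → (G.neighborSet (a + t)).ncard = 2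

namespace HamArc

variable {n : ℕ} {G : SimpleGraph (ZMod n)} {a : ZMod n} {L : ℕ}

theorem add_natCast_inj (hA : HamArc G a L) {i j : ℕ} (hi : i ≤ L) (hj : j ≤ L)
    (h : a + (i : ZMod n) = a + j) : i = j :=
  ZMod.add_natCast_injOn a (by simp; have := hA.lt; omega) (by simp; have := hA.lt; omega) h

theorem adj_add_succ (hA : HamArc G a L) (t : ℕ) : G.Adj (a + t) (a + (t + 1 : ℕ)) := by
  simpa [add_assoc] using hA.adj_add_one (a + t)

theorem eq_or_eq_of_adj (hA : HamArc G a L) {t : ℕ} (h0 : 0 < t) (ht : t < L) {z : ZMod n}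
    (hz : G.Adj (a + t) z) : z = a + (t - 1 : ℕ) ∨ z = a + (t + 1 : ℕ) := by
  refine eq_or_eq_of_adj_of_ncard_neighborSet_eq_two (hA.ncard_neighborSet t h0 ht) ?_
    (hA.adj_add_succ t) (fun h => ?_) hz
  · simpa [Nat.sub_add_cancel h0] using (hA.adj_add_succ (t - 1)).symm
  · have := hA.add_natCast_inj (by omega) (by omega) h
    omega

theorem not_adj_self_add (hA : HamArc G a L) {s : ℕ} (h1 : 1 < s) (hs : s < L) :
    ¬G.Adj a (a + s) := fun h => by
  rcases hA.eq_or_eq_of_adj (by omega) hs h.symm with h' | h'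
  · have := hA.add_natCast_inj (i := 0) (j := s - 1) (by omega) (by omega) (by simpa using h')
    omega
  · have := hA.add_natCast_inj (i := 0) (j := s + 1) (by omega) (by omega) (by simpa using h')
    omega

theorem forall_adj_one (hA : HamArc G a L) (hL : 2 ≤ L) :
    ∀ z, G.Adj (a + 1) z → z = a ∨ z = a + 2 := fun z hz => by
  simpa using hA.eq_or_eq_of_adj (t := 1) one_pos (by omega) (by simpa using hz)

theorem adj_one_self (hA : HamArc G a L) : G.Adj (a + 1) a := (hA.adj_add_one a).symm

theorem adj_one_two (hA : HamArc G a L) : G.Adj (a + 1) (a + 2) := by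
  simpa [add_assoc, one_add_one_eq_two] using hA.adj_add_one (a + 1)

theorem card_image_range (hA : HamArc G a L) :
    ((Finset.range (L + 1)).image fun t : ℕ => a + (t : ZMod n)).card = L + 1 := by
  rw [Finset.card_image_of_injOn (fun i hi j hj => hA.add_natCast_inj (by simp at hi; omega)
    (by simp at hj; omega)), Finset.card_range]

section Cycle

variable {x : ZMod n} {c : G.Walk x x}

theorem pred_and_succ_mem_support (hA : HamArc G a L) (hc : c.IsCycle) {t : ℕ} (h0 : 0 < t)
    (ht : t < L) (hmem : a + (t : ZMod n) ∈ c.support) :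
    a + ((t - 1 : ℕ) : ZMod n) ∈ c.support ∧ a + ((t + 1 : ℕ) : ZMod n) ∈ c.support := by
  obtain ⟨z₁, z₂, hne, h₁, h₂, hz₁, hz₂⟩ := hc.exists_adj_adj_of_mem_support hmem
  rcases hA.eq_or_eq_of_adj h0 ht h₁ with rfl | rfl <;>
    rcases hA.eq_or_eq_of_adj h0 ht h₂ with rfl | rfl
  all_goals first | exact absurd rfl hne | exact ⟨‹_›, ‹_›⟩

theorem one_mem_support (hA : HamArc G a L) (hc : c.IsCycle) {t : ℕ} (h0 : 0 < t) (ht : t < L)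
    (hmem : a + (t : ZMod n) ∈ c.support) : a + 1 ∈ c.support := by
  induction t with
  | zero => omega
  | succ s ih =>
    rcases Nat.eq_zero_or_pos s with rfl | hs
    · simpa using hmem
    · exact ih hs (by omega) (by simpa using (hA.pred_and_succ_mem_support hc h0 ht hmem).1)

theorem mem_support_of_one_mem (hA : HamArc G a L) (hc : c.IsCycle) (hL : 2 ≤ L)
    (h1 : a + 1 ∈ c.support) {s : ℕ} (hs : s ≤ L) : a + (s : ZMod n) ∈ c.support := by
  have h1' : a + ((1 : ℕ) : ZMod n) ∈ c.support := by simpa using h1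
  induction s with
  | zero => simpa using (hA.pred_and_succ_mem_support hc one_pos (by omega) h1').1
  | succ s ih =>
    rcases Nat.eq_zero_or_pos s with rfl | hs0
    · exact h1'
    · exact (hA.pred_and_succ_mem_support hc hs0 (by omega) (ih (by omega))).2

theorem image_range_subset_support (hA : HamArc G a L) (hc : c.IsCycle)
    (hL : 2 ≤ L) (h1 : a + 1 ∈ c.support) :
    ∀ y ∈ (Finset.range (L + 1)).image fun t : ℕ => a + (t : ZMod n), y ∈ c.support := by
  simp only [Finset.mem_image, Finset.mem_range]
  rintro _ ⟨t, ht, rfl⟩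
  exact hA.mem_support_of_one_mem hc hL h1 (by omega)

theorem lt_length_of_one_mem (hA : HamArc G a L) (hc : c.IsCycle) (hL : 2 ≤ L)
    (h1 : a + 1 ∈ c.support) : L < c.length := by
  have := hc.card_le_length (hA.image_range_subset_support hc hL h1)
  rw [hA.card_image_range] at this
  omega

theorem add_two_le_length_of_one_mem (hA : HamArc G a L) (hc : c.IsCycle) (hL : 2 ≤ L)
    (hnc : ¬G.Adj a (a + L)) (h1 : a + 1 ∈ c.support) : L + 2 ≤ c.length := by
  obtain ⟨z₁, z₂, hne, h₁, h₂, hz₁, hz₂⟩ :=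
    hc.exists_adj_adj_of_mem_support (by simpa using hA.mem_support_of_one_mem hc hL h1 L.zero_le)
  obtain ⟨y, hy, hya, hy1⟩ : ∃ y, G.Adj a y ∧ y ∈ c.support ∧ y ≠ a + 1 := by
    by_cases h : z₁ = a + 1
    · exact ⟨z₂, h₂, hz₂, h ▸ hne.symm⟩
    · exact ⟨z₁, h₁, hz₁, h⟩
  have hy_notMem : y ∉ (Finset.range (L + 1)).image fun t : ℕ => a + (t : ZMod n) := by
    simp only [Finset.mem_image, Finset.mem_range, not_exists, not_and]
    rintro s hs rfl
    rcases Nat.lt_or_ge s 2 with hs2 | hs2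
    · interval_cases s
      · exact hy.ne (by simp)
      · exact hy1 (by simp)
    · rcases (Nat.lt_succ_iff.mp hs).lt_or_eq with hsL | rfl
      · exact hA.not_adj_self_add hs2 hsL hy
      · exact hnc hy
  have := hc.card_le_length (s := insert y _) (Finset.forall_mem_insert _ _ _ |>.mpr
    ⟨hya, hA.image_range_subset_support hc hL h1⟩)
  rw [Finset.card_insert_of_notMem hy_notMem, hA.card_image_range] at this
  exact this

theorem length_add_le_of_one_notMem [NeZero n] (hA : HamArc G a L) (hc : c.IsCycle)
    (h1 : a + 1 ∉ c.support) : c.length + (L - 1) ≤ n := by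
  have := hc.length_add_card_le (s := (Finset.Ioo 0 L).image fun t : ℕ => a + (t : ZMod n)) (by
    simp only [Finset.mem_image, Finset.mem_Ioo]
    rintro _ ⟨t, ⟨h0, ht⟩, rfl⟩ hmem
    exact h1 (hA.one_mem_support hc h0 ht hmem))
  rwa [Finset.card_image_of_injOn (fun i hi j hj => hA.add_natCast_inj (by simp at hi; omega)
    (by simp at hj; omega)), Nat.card_Ioo, ZMod.card] at this

theorem exists_isPath_from_end (hA : HamArc G a L) {j : ℕ} (hj : 1 < j) (hjL : j ≤ L)
    {P : G.Walk (a + j) a} (hP : P.IsPath)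
    (hPj : ∀ t : ℕ, 0 < t → t < j → a + (t : ZMod n) ∉ P.support) :
    ∃ Q : G.Walk (a + L) a, Q.IsPath ∧ Q.length + (L - j) = P.length ∧
      ∀ t : ℕ, 0 < t → t < L → a + (t : ZMod n) ∉ Q.support := by
  obtain ⟨d, hd⟩ : ∃ d, j + d = L := ⟨L - j, by omega⟩
  induction d generalizing j with
  | zero =>
    obtain rfl : j = L := hd
    exact ⟨P, hP, by simp, hPj⟩
  | succ d ih =>
    have hne : a + (j : ZMod n) ≠ a := fun h => by
      have := hA.add_natCast_inj (j := 0) hjL (by omega) (by simpa using h)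
      omega
    obtain ⟨z, hz, P', rfl⟩ := Walk.not_nil_iff.mp (Walk.not_nil_of_ne (p := P) hne)
    obtain ⟨hP', hjP'⟩ := (Walk.cons_isPath_iff _ _).mp hP
    rcases hA.eq_or_eq_of_adj (by omega) (by omega) hz with rfl | rfl
    · exact absurd (by simp) (hPj (j - 1) (by omega) (by omega))
    · have hP'j : ∀ t : ℕ, 0 < t → t < j + 1 → a + (t : ZMod n) ∉ P'.support := by
        intro t h0 ht hmem
        rcases (Nat.lt_succ_iff.mp ht).lt_or_eq with ht | rfl
        · exact hPj t h0 ht (by simp [hmem])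
        · exact hjP' hmem
      obtain ⟨Q, hQ, hQlen, hQL⟩ := ih (by omega) (by omega) hP' hP'j (by omega)
      exact ⟨Q, hQ, by simp; omega, hQL⟩

theorem exists_isCycle_of_adj (hA : HamArc G a L) (hL : 2 ≤ L) (hch : G.Adj a (a + L))
    (hc : c.IsCycle) (h1 : a + 1 ∈ c.support) (hlen : L + 2 ≤ c.length) :
    ∃ c' : G.Walk a a, c'.IsCycle ∧ c'.length + L = c.length + 1 ∧ a + 1 ∉ c'.support := by
  have hnb : ∀ z, G.Adj (a + 1) z → z = a ∨ z = a + ((2 : ℕ) : ZMod n) := fun z hz => by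
    simpa using hA.forall_adj_one (by omega) z hz
  obtain ⟨P, hP, h1P, hPlen⟩ := hc.exists_isPath_of_forall_adj hnb h1
  obtain ⟨Q, hQ, hQlen, hQL⟩ := hA.exists_isPath_from_end (le_refl 2) (by omega) hP
    (fun t h0 ht => by
      obtain rfl : t = 1 := by omega
      simpa using h1P)
  refine ⟨.cons hch Q, (Walk.cons_isCycle_iff Q hch).mpr ⟨hQ, fun h => ?_⟩, by simp; omega, ?_⟩
  · have := hQ.length_eq_one_of_mem_edges (Sym2.eq_swap ▸ h)
    omega
  · rw [Walk.support_cons, List.mem_cons, not_or]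
    refine ⟨fun h => ?_, by simpa using hQL 1 one_pos (by omega)⟩
    have := hA.add_natCast_inj (i := 1) (j := 0) (by omega) (by omega) (by simpa using h)
    omega

end Cycle

theorem hasCycleLength_contractEdge_of_lt [NeZero n] (hA : HamArc G a L) (hG : Pancyclic G)
    (hL : 2 ≤ L) {k : ℕ} (hk3 : 3 ≤ k) (hk : k < n) (hkL : n < k + L) :
    HasCycleLength (contractEdge G (a + 1) (a + 2)) k := by
  obtain ⟨x, c, hc, hlen⟩ := hG (k + 1) (by omega) (by rw [ZMod.card]; omega)
  have h1 : a + 1 ∈ c.support := by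
    by_contra h1
    have := hA.length_add_le_of_one_notMem hc h1
    omega
  simpa [hlen] using hasCycleLength_contractEdge_of_mem hA.adj_one_self (hA.forall_adj_one hL) hc h1
    (by omega)

theorem pancyclic_contractEdge_of_not_adj [NeZero n] (hA : HamArc G a L) (hG : Pancyclic G)
    (hL : 2 ≤ L) (hnc : ¬G.Adj a (a + L)) (hn : n ≤ 2 * L + 1) :
    Pancyclic (contractEdge G (a + 1) (a + 2)) := by
  intro k hk3 hk
  rw [ZMod.card_subtype_ne] at hk
  by_cases hkL : n < k + L
  · exact hA.hasCycleLength_contractEdge_of_lt hG hL hk3 (by omega) hkL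
  obtain ⟨x, c, hc, rfl⟩ := hG k hk3 (by rw [ZMod.card]; omega)
  refine hasCycleLength_contractEdge_of_notMem hc fun h1 => ?_
  have := hA.add_two_le_length_of_one_mem hc hL hnc h1
  omega

theorem pancyclic_contractEdge_of_adj [NeZero n] (hA : HamArc G a L) (hG : Pancyclic G)
    (hL : 2 ≤ L) (hch : G.Adj a (a + L)) (hn : n + 2 ≤ 3 * L) :
    Pancyclic (contractEdge G (a + 1) (a + 2)) := by
  intro k hk3 hk
  rw [ZMod.card_subtype_ne] at hk
  by_cases hkL : n < k + L
  · exact hA.hasCycleLength_contractEdge_of_lt hG hL hk3 (by omega) hkL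
  by_cases hkL' : k ≤ L
  · obtain ⟨x, c, hc, rfl⟩ := hG k hk3 (by rw [ZMod.card]; omega)
    refine hasCycleLength_contractEdge_of_notMem hc fun h1 => ?_
    have := hA.lt_length_of_one_mem hc hL h1
    omega
  -- a longer cycle must run through the whole arc, which the chord then short-cuts
  obtain ⟨x, c, hc, hlen⟩ := hG (k + L - 1) (by omega) (by rw [ZMod.card]; omega)
  have h1 : a + 1 ∈ c.support := by
    by_contra h1
    have := hA.length_add_le_of_one_notMem hc h1
    omega
  obtain ⟨c', hc', hlen', h1'⟩ := hA.exists_isCycle_of_adj hL hch hc h1 (by omega)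
  exact (by omega : c'.length = k) ▸ hasCycleLength_contractEdge_of_notMem hc' h1'

theorem m_pred_lt_ncard_edgeSet [NeZero n] (hA : HamArc G a L) (hL : 3 ≤ L)
    (hG' : Pancyclic (contractEdge G (a + 1) (a + 2))) : m (n - 1) < G.edgeSet.ncard := by
  have hm := hG'.m_card_le_ncard_edgeSet
  rw [ZMod.card_subtype_ne] at hm
  have hwv : a ≠ a + 2 := fun h => by
    have := hA.add_natCast_inj (i := 0) (j := 2) (by omega) (by omega) (by simpa using h)
    omega
  have := ncard_edgeSet_contractEdge_add_one hA.adj_one_self hA.adj_one_two hwv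
    (hA.forall_adj_one (by omega)) (by simpa using hA.not_adj_self_add (s := 2) one_lt_two hL)
  omega

end HamArc

/-- For `n > 6`: if some minimal pancyclic graph on `n` vertices (with the standard
Hamiltonian cycle on `ZMod n`) has an arc of length at least `(n-1)/2` with no chord
joining its endpoints, then `m (n-1) < m n`; if some minimal pancyclic graph on `n`
vertices has an arc of length at least `(n+2)/3` whose endpoints are joined by a
chord, then `m (n-1) ≤ m n`. -/
theorem stmt_10 {n : ℕ} [NeZero n] (hn : 6 < n) :
    ((∃ (G : SimpleGraph (ZMod n)) (a : ZMod n) (L : ℕ),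
        (∀ i : ZMod n, G.Adj i (i + 1)) ∧ Pancyclic G ∧ G.edgeSet.ncard = m n ∧
        IsArc G a L ∧ ¬ G.Adj a (a + (L : ZMod n)) ∧ n - 1 ≤ 2 * L) →
      m (n - 1) < m n) ∧
    ((∃ (G : SimpleGraph (ZMod n)) (a : ZMod n) (L : ℕ),
        (∀ i : ZMod n, G.Adj i (i + 1)) ∧ Pancyclic G ∧ G.edgeSet.ncard = m n ∧
        IsArc G a L ∧ G.Adj a (a + (L : ZMod n)) ∧ n + 2 ≤ 3 * L) →
      m (n - 1) ≤ m n) := by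
  constructor
  · rintro ⟨G, a, L, hG, hpan, hm, ⟨hLn, hdeg, -, -⟩, hnc, hL⟩
    have hA : HamArc G a L := ⟨hG, hLn, hdeg⟩
    exact hm ▸ hA.m_pred_lt_ncard_edgeSet (by omega)
      (hA.pancyclic_contractEdge_of_not_adj hpan (by omega) hnc (by omega))
  · rintro ⟨G, a, L, hG, hpan, hm, ⟨hLn, hdeg, -, -⟩, hch, hL⟩
    have hA : HamArc G a L := ⟨hG, hLn, hdeg⟩
    exact hm ▸ (hA.m_pred_lt_ncard_edgeSet (by omega)
      (hA.pancyclic_contractEdge_of_adj hpan (by omega) hch (by omega))).le
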